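/- Let d ≥ 1 and k ≥ 2 be integers, let B be a d×d complex matrix with Im(Tr B) > 0, and let Q be a d×d matrix over ℂ[X] with every entry of degree at most k − 2. Define M = X^k·I − X^{k−1}·B + Q as a d×d matrix over ℂ[X]. Then the polynomial det M has at least one complex root z with Im z > 0. -/

import Mathlib

/-!
Only the identity permutation contributes to the top two coefficients of `det M`: every other
permutation picks at least two off-diagonal entries, each of degree at most `k - 1`, so its term
has degree at most `dk - 2`. Hence `det M` is monic of degree `dk` with subleading coefficient
`-Tr B`, its roots sum to `Tr B` by Vieta, and one of them has positive imaginary part.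
-/

open Polynomial Finset

namespace Polynomial

variable {R ι : Type*} [CommRing R] [Nontrivial R]

theorem Monic.nextCoeff_add_of_degree_lt {p q : R[X]} (hp : p.Monic)
    (hq : q.degree < ↑(p.natDegree - 1)) : (p + q).nextCoeff = p.nextCoeff := by
  rcases Nat.eq_zero_or_pos p.natDegree with h0 | hpos
  · have hq0 : q = 0 := by simpa [h0] using hq
    rw [hq0, add_zero]
  · have hdeg : (p + q).natDegree = p.natDegree := natDegree_add_eq_left_of_degree_lt <|
      hq.trans_le <| (Nat.cast_le.mpr (Nat.sub_le _ _)).trans_eq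
        (degree_eq_natDegree hp.ne_zero).symm
    rw [nextCoeff_of_natDegree_pos (hdeg ▸ hpos), nextCoeff_of_natDegree_pos hpos, hdeg,
      coeff_add, coeff_eq_zero_of_degree_lt hq, add_zero]

variable {k : ℕ} {p : R[X]}

theorem natDegree_X_pow_add_of_natDegree_lt (hp : p.natDegree < k) :
    (X ^ k + p).natDegree = k := by
  rw [natDegree_add_eq_left_of_natDegree_lt (by rwa [natDegree_X_pow]), natDegree_X_pow]

theorem monic_X_pow_add_of_natDegree_lt (hp : p.natDegree < k) : (X ^ k + p).Monic :=
  monic_X_pow_add <| (degree_lt_degree (by rwa [natDegree_X_pow])).trans_eq (degree_X_pow k)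

theorem nextCoeff_X_pow_add_of_natDegree_lt (hp : p.natDegree < k) :
    (X ^ k + p).nextCoeff = p.coeff (k - 1) := by
  have hdeg := natDegree_X_pow_add_of_natDegree_lt hp
  rw [nextCoeff_of_natDegree_pos (by omega), hdeg, coeff_add, coeff_X_pow, if_neg (by omega),
    zero_add]

variable {s : Finset ι} {f : ι → R[X]}

theorem monic_prod_X_pow_add (hf : ∀ i ∈ s, (f i).natDegree < k) :
    (∏ i ∈ s, (X ^ k + f i)).Monic :=
  monic_prod_of_monic _ _ fun i hi => monic_X_pow_add_of_natDegree_lt (hf i hi)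

theorem natDegree_prod_X_pow_add (hf : ∀ i ∈ s, (f i).natDegree < k) :
    (∏ i ∈ s, (X ^ k + f i)).natDegree = #s * k := by
  rw [natDegree_prod_of_monic _ _ fun i hi => monic_X_pow_add_of_natDegree_lt (hf i hi),
    sum_congr rfl fun i hi => natDegree_X_pow_add_of_natDegree_lt (hf i hi), sum_const,
    smul_eq_mul]

theorem nextCoeff_prod_X_pow_add (hf : ∀ i ∈ s, (f i).natDegree < k) :
    (∏ i ∈ s, (X ^ k + f i)).nextCoeff = ∑ i ∈ s, (f i).coeff (k - 1) := by
  rw [Monic.nextCoeff_prod _ _ fun i hi => monic_X_pow_add_of_natDegree_lt (hf i hi)]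
  exact sum_congr rfl fun i hi => nextCoeff_X_pow_add_of_natDegree_lt (hf i hi)

end Polynomial

namespace Matrix

variable {R n : Type*} [CommRing R] [Fintype n] [DecidableEq n]

theorem natDegree_prod_perm_add_card_support_le {M : Matrix n n R[X]} {k : ℕ}
    (hdiag : ∀ i, (M i i).natDegree ≤ k) (hoff : ∀ i j, i ≠ j → (M i j).natDegree < k)
    (σ : Equiv.Perm n) :
    (∏ i, M (σ i) i).natDegree + #σ.support ≤ Fintype.card n * k := by
  calc (∏ i, M (σ i) i).natDegree + #σ.support
      ≤ ∑ i, (M (σ i) i).natDegree + ∑ i, if σ i ≠ i then 1 else 0 := by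
        rw [Equiv.Perm.support, card_filter]
        gcongr
        exact natDegree_prod_le _ _
    _ = ∑ i, ((M (σ i) i).natDegree + if σ i ≠ i then 1 else 0) := sum_add_distrib.symm
    _ ≤ ∑ _i : n, k := sum_le_sum fun i _ => by
        split_ifs with h
        · exact hoff _ _ h
        · simpa [not_not.mp h] using hdiag i
    _ = Fintype.card n * k := by simp

theorem det_sub_prod_diag_degree_lt {M : Matrix n n R[X]} {k : ℕ}
    (hdiag : ∀ i, (M i i).natDegree ≤ k) (hoff : ∀ i j, i ≠ j → (M i j).natDegree < k) :
    (M.det - ∏ i, M i i).degree < ↑(Fintype.card n * k - 1) := by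
  rw [det_apply', ← add_sum_erase _ _ (mem_univ 1)]
  simp only [Equiv.Perm.sign_one, Units.val_one, Int.cast_one, Equiv.Perm.one_apply, one_mul,
    add_sub_cancel_left]
  rw [← mem_degreeLT]
  refine Submodule.sum_mem _ fun σ hσ => ?_
  rw [← C_eq_intCast, C_mul']
  refine Submodule.smul_mem _ _ ?_
  have hbound := natDegree_prod_perm_add_card_support_le hdiag hoff σ
  have hmoved := Equiv.Perm.two_le_card_support_of_ne_one (ne_of_mem_erase hσ)
  rw [mem_degreeLT]
  exact degree_le_natDegree.trans_lt (Nat.cast_lt.mpr (by omega))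

variable [Nontrivial R] {k : ℕ} {N : Matrix n n R[X]}

theorem det_X_pow_smul_one_add_sub_prod_degree_lt (hN : ∀ i j, (N i j).natDegree < k) :
    (((X : R[X]) ^ k • (1 : Matrix n n R[X]) + N).det - ∏ i, (X ^ k + N i i)).degree <
      ↑(Fintype.card n * k - 1) := by
  have hdiag : ∀ i, (X ^ k + N i i).natDegree ≤ k := fun i =>
    (natDegree_X_pow_add_of_natDegree_lt (hN i i)).le
  simpa using det_sub_prod_diag_degree_lt (M := (X : R[X]) ^ k • (1 : Matrix n n R[X]) + N)
    (by simpa using hdiag) (fun i j hij => by simpa [one_apply_ne hij] using hN i j)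

theorem monic_det_X_pow_smul_one_add (hN : ∀ i j, (N i j).natDegree < k) :
    ((X : R[X]) ^ k • (1 : Matrix n n R[X]) + N).det.Monic := by
  have hN' : ∀ i ∈ univ, (N i i).natDegree < k := fun i _ => hN i i
  have hprod := monic_prod_X_pow_add hN'
  rw [← add_sub_cancel (∏ i, (X ^ k + N i i)) (det _)]
  refine hprod.add_of_left <| (det_X_pow_smul_one_add_sub_prod_degree_lt hN).trans_le ?_
  rw [degree_eq_natDegree hprod.ne_zero, natDegree_prod_X_pow_add hN', card_univ]
  exact Nat.cast_le.mpr (Nat.sub_le _ _)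

theorem nextCoeff_det_X_pow_smul_one_add (hN : ∀ i j, (N i j).natDegree < k) :
    ((X : R[X]) ^ k • (1 : Matrix n n R[X]) + N).det.nextCoeff =
      ∑ i, (N i i).coeff (k - 1) := by
  have hN' : ∀ i ∈ univ, (N i i).natDegree < k := fun i _ => hN i i
  have hE := det_X_pow_smul_one_add_sub_prod_degree_lt hN
  rw [← card_univ, ← natDegree_prod_X_pow_add hN'] at hE
  rw [← add_sub_cancel (∏ i, (X ^ k + N i i)) (det _),
    (monic_prod_X_pow_add hN').nextCoeff_add_of_degree_lt hE, nextCoeff_prod_X_pow_add hN']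

theorem sum_roots_det_X_pow_smul_one_add {K : Type*} [Field K] [IsAlgClosed K]
    {N : Matrix n n K[X]} (hN : ∀ i j, (N i j).natDegree < k) :
    ((X : K[X]) ^ k • (1 : Matrix n n K[X]) + N).det.roots.sum =
      -∑ i, (N i i).coeff (k - 1) := by
  rw [← nextCoeff_det_X_pow_smul_one_add hN,
    (IsAlgClosed.splits _).nextCoeff_eq_neg_sum_roots_of_monic (monic_det_X_pow_smul_one_add hN),
    neg_neg]

end Matrix

theorem Complex.exists_mem_im_pos_of_im_sum_pos {s : Multiset ℂ} (h : 0 < s.sum.im) :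
    ∃ z ∈ s, 0 < z.im := by
  by_contra! hs
  have him : s.sum.im = (s.map Complex.im).sum := map_multiset_sum Complex.imAddGroupHom s
  have hle := (s.map Complex.im).sum_le_card_nsmul 0 (by simpa using hs)
  rw [smul_zero] at hle
  linarith

theorem det_matrixPolynomial_has_upper_half_plane_root_general
    (d k : ℕ) (hk : 2 ≤ k)
    (B : Matrix (Fin d) (Fin d) ℂ) (hB : 0 < B.trace.im)
    (Q : Matrix (Fin d) (Fin d) (Polynomial ℂ))
    (hQ : ∀ i j, (Q i j).degree ≤ (k - 2 : ℕ)) :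
    ∃ z : ℂ, 0 < z.im ∧
      ((X : Polynomial ℂ) ^ k • (1 : Matrix (Fin d) (Fin d) (Polynomial ℂ))
          - (X : Polynomial ℂ) ^ (k - 1) • B.map Polynomial.C + Q).det.IsRoot z := by
  set N := Q - (X : ℂ[X]) ^ (k - 1) • B.map C with hN_def
  have hN_apply : ∀ i j, N i j = Q i j - monomial (k - 1) (B i j) := fun i j => by
    simp [N, X_pow_mul, C_mul_X_pow_eq_monomial]
  have hQ_natDegree : ∀ i j, (Q i j).natDegree ≤ k - 2 := fun i j =>
    natDegree_le_of_degree_le (hQ i j)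
  have hN : ∀ i j, (N i j).natDegree < k := fun i j => by
    rw [hN_apply]
    refine (natDegree_sub_le _ _).trans_lt (max_lt ?_ ?_)
    · exact (hQ_natDegree i j).trans_lt (by omega)
    · exact (natDegree_monomial_le _).trans_lt (by omega)
  have htrace : ∑ i, (N i i).coeff (k - 1) = -B.trace := by
    have hQ_coeff : ∀ i, (Q i i).coeff (k - 1) = 0 := fun i =>
      coeff_eq_zero_of_natDegree_lt ((hQ_natDegree i i).trans_lt (by omega))
    simp [hN_apply, hQ_coeff, Matrix.trace]
  rw [sub_add_eq_add_sub, add_sub_assoc, ← hN_def]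
  have hsum := Matrix.sum_roots_det_X_pow_smul_one_add hN
  rw [htrace, neg_neg] at hsum
  obtain ⟨z, hz, him⟩ := Complex.exists_mem_im_pos_of_im_sum_pos (hsum ▸ hB)
  exact ⟨z, him, isRoot_of_mem_roots hz⟩

/-- Global Vieta existence: if `Im(Tr B) > 0`, the determinant of the matrix
polynomial `M = X^k • I - X^{k-1} • B + Q` (with `deg Q_{ij} ≤ k - 2`) has at
least one root in the open upper half-plane. -/
theorem det_matrixPolynomial_has_upper_half_plane_root
    (d k : ℕ) (hd : 1 ≤ d) (hk : 2 ≤ k)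
    (B : Matrix (Fin d) (Fin d) ℂ) (hB : 0 < B.trace.im)
    (Q : Matrix (Fin d) (Fin d) (Polynomial ℂ))
    (hQ : ∀ i j, (Q i j).degree ≤ (k - 2 : ℕ)) :
    ∃ z : ℂ, 0 < z.im ∧
      ((X : Polynomial ℂ) ^ k • (1 : Matrix (Fin d) (Fin d) (Polynomial ℂ))
          - (X : Polynomial ℂ) ^ (k - 1) • B.map Polynomial.C + Q).det.IsRoot z :=
  det_matrixPolynomial_has_upper_half_plane_root_general d k hk B hB Q hQ
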